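/- arXiv:1102.0309 — 2 statements merged into one kernel-verified Lean document; each statement's English description precedes it below -/
import Mathlib

section
/- Let T = (V,E) be an X-tree and, for each cord xy ∈ binom(X,2), let λ^T_{xy} : ℝ^E → ℝ be the linear map sending ω to the sum of ω(e) over the edges e of the path in T from x to y. Then a subset L of binom(X,2) is an edge-weight lasso for T if and only if X = ∪_{c∈L} c and the only map ω₀ ∈ ℝ^E satisfying λ^T_{xy}(ω₀) = 0 for all xy ∈ L is ω₀ = 0. -/
/- Common definitions for formalizing results of Dress, Huber & Steel,
   "Lassoing a phylogenetic tree I: Basic properties, shellings, and covers".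

   Trees are modelled as simple graphs on an ambient vertex type `U`;
   the vertex set of the tree is the support of the graph (every vertex of a
   tree with at least two vertices has degree >= 1). -/

noncomputable section
open scoped Classical

namespace Lasso

variable {U : Type}

/-- The degree of a vertex. -/
def deg (G : SimpleGraph U) (v : U) : ℕ := (G.neighborSet v).ncard

/-- A leaf is a vertex of degree `1`. -/
def IsLeaf (G : SimpleGraph U) (v : U) : Prop := deg G v = 1

/-- An interior vertex: a non-leaf vertex of the tree. -/
def Interior (G : SimpleGraph U) (v : U) : Prop := v ∈ G.support ∧ ¬ IsLeaf G v

/-- `G` is an `X`-tree: a finite tree without vertices of degree two whose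
    leaf set is exactly `X`. -/
structure IsXTree (X : Set U) (G : SimpleGraph U) : Prop where
  support_finite : G.support.Finite
  support_nonempty : G.support.Nonempty
  connected : ∀ a ∈ G.support, ∀ b ∈ G.support, G.Reachable a b
  acyclic : G.IsAcyclic
  no_deg_two : ∀ v : U, deg G v ≠ 2
  leaves_eq : X = {v : U | IsLeaf G v}

/-- An edge weighting of `G`: nonnegative, and zero away from the edges of `G`
    (so that it represents an element of `ℝ_{≥0}^E`). -/
structure IsWeighting (G : SimpleGraph U) (ω : Sym2 U → ℝ) : Prop where
  nonneg : ∀ e, 0 ≤ ω e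
  zero_off : ∀ e, e ∉ G.edgeSet → ω e = 0

/-- A proper edge weighting: in addition strictly positive on interior edges
    (edges both of whose endpoints are non-leaves). -/
structure IsProperWeighting (G : SimpleGraph U) (ω : Sym2 U → ℝ)
    extends IsWeighting G ω : Prop where
  interior_pos : ∀ e ∈ G.edgeSet, (∀ u ∈ e, ¬ IsLeaf G u) → 0 < ω e

/-- The set `E_T(x|y)` of edges separating `x` from `y`, i.e. the edges lying
    on every walk from `x` to `y` (in a tree: the edges of the path). -/
def pathEdges (G : SimpleGraph U) (x y : U) : Set (Sym2 U) :=
  {e | e ∈ G.edgeSet ∧ ∀ p : G.Walk x y, e ∈ p.edges}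

/-- The induced distance `D_ω(x,y)`. -/
def tdist (G : SimpleGraph U) (ω : Sym2 U → ℝ) (x y : U) : ℝ :=
  ∑ᶠ e ∈ pathEdges G x y, ω e

/-- Path edge set of an unordered pair. -/
def pairPathEdges (G : SimpleGraph U) (c : Sym2 U) : Set (Sym2 U) :=
  {e | e ∈ G.edgeSet ∧ ∀ x y : U, c = s(x, y) → ∀ p : G.Walk x y, e ∈ p.edges}

/-- `D_ω` on an unordered pair (a cord); `λ^T_c(ω)`. -/
def pdist (G : SimpleGraph U) (ω : Sym2 U → ℝ) (c : Sym2 U) : ℝ :=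
  ∑ᶠ e ∈ pairPathEdges G c, ω e

/-- `(G,ω)` and `(G',ω')` are `L`-isometric. -/
def LIso (L : Set (Sym2 U)) (G : SimpleGraph U) (ω : Sym2 U → ℝ)
    (G' : SimpleGraph U) (ω' : Sym2 U → ℝ) : Prop :=
  ∀ x y : U, s(x, y) ∈ L → tdist G ω x y = tdist G' ω' x y

/-- `L` is a set of cords of `X`: 2-element subsets of `X`. -/
def IsCordSet (X : Set U) (L : Set (Sym2 U)) : Prop :=
  ∀ c ∈ L, ¬ c.IsDiag ∧ ∀ u ∈ c, u ∈ X

/-- The union of all cords in `L`. -/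
def cup (L : Set (Sym2 U)) : Set U := {v | ∃ c ∈ L, v ∈ c}

/-- `L` is an edge-weight lasso for `G`. -/
def EdgeWeightLasso (G : SimpleGraph U) (L : Set (Sym2 U)) : Prop :=
  ∀ ω ω' : Sym2 U → ℝ, IsProperWeighting G ω → IsProperWeighting G ω' →
    LIso L G ω G ω' → ω = ω'

/-- `G ≃ G'` via a graph isomorphism fixing `X` pointwise. -/
def FixingIso (X : Set U) (G G' : SimpleGraph U) : Prop :=
  ∃ φ : G ≃g G', ∀ x ∈ X, φ x = x

/-- `(G,ω)` and `(G',ω')` are isometric: a graph isomorphism fixing `X`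
    pointwise and preserving edge weights. -/
def FixingIsometry (X : Set U) (G G' : SimpleGraph U) (ω ω' : Sym2 U → ℝ) : Prop :=
  ∃ φ : G ≃g G', (∀ x ∈ X, φ x = x) ∧
    ∀ e ∈ G.edgeSet, ω' (Sym2.map (fun u => φ u) e) = ω e

/-- `L` is a topological lasso for the `X`-tree `G`. -/
def TopologicalLasso (X : Set U) (G : SimpleGraph U) (L : Set (Sym2 U)) : Prop :=
  ∀ G' : SimpleGraph U, IsXTree X G' →
    ∀ ω ω' : Sym2 U → ℝ, IsProperWeighting G ω → IsProperWeighting G' ω' →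
      LIso L G ω G' ω' → FixingIso X G G'

/-- `L` is a strong lasso for the `X`-tree `G`. -/
def StrongLasso (X : Set U) (G : SimpleGraph U) (L : Set (Sym2 U)) : Prop :=
  ∀ G' : SimpleGraph U, IsXTree X G' →
    ∀ ω ω' : Sym2 U → ℝ, IsProperWeighting G ω → IsProperWeighting G' ω' →
      LIso L G ω G' ω' → FixingIsometry X G G' ω ω'

/-- `G` displays the quartet `a a' ‖ b b'`: some edge lies on all four paths
    joining `a` or `a'` to `b` or `b'`. -/
def DisplaysQ (G : SimpleGraph U) (a a' b b' : U) : Prop :=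
  ∃ e : Sym2 U, e ∈ pathEdges G a b ∧ e ∈ pathEdges G a b' ∧
    e ∈ pathEdges G a' b ∧ e ∈ pathEdges G a' b'

def Distinct4 (a b c d : U) : Prop :=
  a ≠ b ∧ a ≠ c ∧ a ≠ d ∧ b ≠ c ∧ b ≠ d ∧ c ≠ d

/-- `a a' ‖ b b' ∈ Q(G)`: a quartet on four distinct elements of `X`
    displayed by `G`. -/
def QuartetOf (X : Set U) (G : SimpleGraph U) (a a' b b' : U) : Prop :=
  a ∈ X ∧ a' ∈ X ∧ b ∈ X ∧ b' ∈ X ∧ Distinct4 a a' b b' ∧ DisplaysQ G a a' b b'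

/-- `G` displays `a a' | b b'`: it displays neither `a b ‖ a' b'` nor
    `a b' ‖ a' b`. -/
def DisplaysBar (G : SimpleGraph U) (a a' b b' : U) : Prop :=
  ¬ DisplaysQ G a b a' b' ∧ ¬ DisplaysQ G a b' a' b

/-- `A, B` is a virtual `T`-split of `X`. -/
def VirtualSplit (X : Set U) (G : SimpleGraph U) (A B : Set U) : Prop :=
  A.Nonempty ∧ B.Nonempty ∧ Disjoint A B ∧ A ∪ B = X ∧
    ∀ a ∈ A, ∀ a' ∈ A, ∀ b ∈ B, ∀ b' ∈ B, a ≠ a' → b ≠ b' → DisplaysBar G a a' b b'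

/-- `G ≤ G'` (`G'` refines `G`), via the standard characterization
    `Q(T) ⊆ Q(T')` of refinement of `X`-trees. -/
def Refines (X : Set U) (G G' : SimpleGraph U) : Prop :=
  ∀ a a' b b' : U, QuartetOf X G a a' b b' → QuartetOf X G' a a' b b'

/-- `L` is a weak lasso for (coralls) the `X`-tree `G`. -/
def WeakLasso (X : Set U) (G : SimpleGraph U) (L : Set (Sym2 U)) : Prop :=
  ∀ G' : SimpleGraph U, IsXTree X G' →
    ∀ ω ω' : Sym2 U → ℝ, IsProperWeighting G ω → IsProperWeighting G' ω' →
      LIso L G ω G' ω' → Refines X G G'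

/-- The subgraph induced on a vertex set `A`. -/
def restrict {α : Type*} (Γ : SimpleGraph α) (A : Set α) : SimpleGraph α where
  Adj u v := Γ.Adj u v ∧ u ∈ A ∧ v ∈ A
  symm := ⟨by rintro u v ⟨h, hu, hv⟩; exact ⟨h.symm, hv, hu⟩⟩
  loopless := ⟨by rintro v ⟨h, _, _⟩; exact Γ.loopless.irrefl v h⟩

/-- The restriction of `Γ` to `A` is a connected graph. -/
def ConnectedOn {α : Type*} (Γ : SimpleGraph α) (A : Set α) : Prop :=
  ∀ x ∈ A, ∀ y ∈ A, (restrict Γ A).Reachable x y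

/-- The connected component of `x` in `Γ` is bipartite. -/
def ComponentBipartite {α : Type*} (Γ : SimpleGraph α) (x : α) : Prop :=
  ∃ f : α → Bool, ∀ u v : α, Γ.Reachable x u → Γ.Adj u v → f u ≠ f v

/-- No connected component (of the graph with vertex set `S`) is bipartite. -/
def StronglyNonBipartite {α : Type*} (Γ : SimpleGraph α) (S : Set α) : Prop :=
  ∀ x ∈ S, ¬ ComponentBipartite Γ x

/-- The graph `Γ` is bipartite. -/
def Bipartite {α : Type*} (Γ : SimpleGraph α) : Prop :=
  ∃ f : α → Bool, ∀ u v : α, Γ.Adj u v → f u ≠ f v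

/-- `E_v`: the set of edges of `G` containing `v`. -/
def Ev (G : SimpleGraph U) (v : U) : Set (Sym2 U) := {e | e ∈ G.edgeSet ∧ v ∈ e}

/-- The graph `G(L,v)` on the edge set `E_v`: two distinct edges at `v` are
    adjacent if some cord of `L` has both on its path. -/
def covGraph (G : SimpleGraph U) (L : Set (Sym2 U)) (v : U) : SimpleGraph (Sym2 U) where
  Adj e e' := e ≠ e' ∧ e ∈ Ev G v ∧ e' ∈ Ev G v ∧
    ∃ x y : U, s(x, y) ∈ L ∧ e ∈ pathEdges G x y ∧ e' ∈ pathEdges G x y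
  symm := ⟨by
    rintro e e' ⟨hne, he, he', x, y, hc, hp, hp'⟩
    exact ⟨hne.symm, he', he, x, y, hc, hp', hp⟩⟩
  loopless := ⟨by rintro e ⟨hne, _⟩; exact hne rfl⟩

/-- `G(L,v)` is the complete graph on `E_v`. -/
def CompleteAt (G : SimpleGraph U) (L : Set (Sym2 U)) (v : U) : Prop :=
  ∀ e ∈ Ev G v, ∀ e' ∈ Ev G v, e ≠ e' → (covGraph G L v).Adj e e'

/-- `L` is a `t`-cover of `G`. -/
def TCover (X : Set U) (G : SimpleGraph U) (L : Set (Sym2 U)) : Prop :=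
  cup L = X ∧ ∀ v : U, Interior G v → CompleteAt G L v

/-- The graph `Γ(L, c)` for the cord `c = x x'`, with vertex set `X − {x,x'}`
    and edge set `L^(c)`. -/
def cordGraphC (X : Set U) (G : SimpleGraph U) (L : Set (Sym2 U)) (x x' : U) :
    SimpleGraph U where
  Adj y y' := y ≠ y' ∧ y ≠ x ∧ y ≠ x' ∧ y' ≠ x ∧ y' ≠ x' ∧
    s(y, y') ∈ L ∧ QuartetOf X G x x' y y' ∧
    ((s(x, y) ∈ L ∧ s(x', y') ∈ L) ∨ (s(x, y') ∈ L ∧ s(x', y) ∈ L))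
  symm := ⟨by
    rintro y y' ⟨hne, h1, h2, h3, h4, hL,
      ⟨hx1, hx2, hy1, hy2, ⟨d1, d2, d3, d4, d5, d6⟩, e, p1, p2, p3, p4⟩, hor⟩
    exact ⟨hne.symm, h3, h4, h1, h2, by rwa [Sym2.eq_swap],
      ⟨hx1, hx2, hy2, hy1, ⟨d1, d3, d2, d5, d4, d6.symm⟩, e, p2, p1, p4, p3⟩, hor.symm⟩⟩
  loopless := ⟨by rintro y ⟨hne, _⟩; exact hne rfl⟩

/-- `v` lies on the path of `G` from `x` to `y`. -/
def OnPath (G : SimpleGraph U) (x y v : U) : Prop :=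
  v = x ∨ v = y ∨ ∃ e ∈ pathEdges G x y, v ∈ e

/-- `v = med_G(a,b,c)`: `v` lies on all three pairwise paths. -/
def IsMedian (G : SimpleGraph U) (a b c v : U) : Prop :=
  OnPath G a b v ∧ OnPath G a c v ∧ OnPath G b c v

/-- `L` is a triplet cover of `G`. -/
def TripletCover (X : Set U) (G : SimpleGraph U) (L : Set (Sym2 U)) : Prop :=
  ∀ v : U, Interior G v → ∃ a b c : U, a ∈ X ∧ b ∈ X ∧ c ∈ X ∧
    a ≠ b ∧ a ≠ c ∧ b ≠ c ∧
    s(a, b) ∈ L ∧ s(a, c) ∈ L ∧ s(b, c) ∈ L ∧ IsMedian G a b c v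

/-- `L` is a pointed `x`-cover of `G`. -/
def PointedCover (X : Set U) (G : SimpleGraph U) (L : Set (Sym2 U)) (x : U) : Prop :=
  cup L = X ∧ (∀ v : U, Interior G v → CompleteAt G L v) ∧
    ∀ v : U, Interior G v → ∃ a b : U, a ≠ b ∧
      s(a, x) ∈ L ∧ s(b, x) ∈ L ∧ IsMedian G a b x v

/-- Every interior vertex has degree `3`. -/
def IsBinary (G : SimpleGraph U) : Prop := ∀ v : U, Interior G v → deg G v = 3

/-- `a, b` form a `T`-cherry with common neighbour `v`. -/
def IsCherry (G : SimpleGraph U) (a b v : U) : Prop :=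
  a ≠ b ∧ IsLeaf G a ∧ IsLeaf G b ∧ G.Adj a v ∧ G.Adj b v

/-- `a, b` form a proper `T`-cherry with common neighbour `v` of degree `3`. -/
def IsProperCherry (G : SimpleGraph U) (a b v : U) : Prop :=
  IsCherry G a b v ∧ deg G v = 3

/-- `W` is a `T`-core of `G`. -/
def IsCore (G : SimpleGraph U) (W : Set U) : Prop :=
  W.Nonempty ∧ W ⊆ G.support ∧
    (∀ a ∈ W, ∀ b ∈ W, (restrict G W).Reachable a b) ∧
    ∀ v ∈ W, deg (restrict G W) v = 1 ∨ deg (restrict G W) v = deg G v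

/-- `X_W`: the leaf set of the induced tree `T_W`. -/
def coreLeaves (G : SimpleGraph U) (W : Set U) : Set U :=
  {v | v ∈ W ∧ deg (restrict G W) v = 1}

/-- `g` is the gate of `x` in `W`: the vertex of `W` closest to `x`. -/
def IsGate (G : SimpleGraph U) (W : Set U) (x g : U) : Prop :=
  g ∈ W ∧ ∀ w ∈ W, OnPath G x w g

/-- `L_W`: the cords induced on the gates. -/
def gateCords (G : SimpleGraph U) (W : Set U) (L : Set (Sym2 U)) : Set (Sym2 U) :=
  {c | ∃ p q y y' : U, s(p, q) ∈ L ∧ IsGate G W p y ∧ IsGate G W q y' ∧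
       y ≠ y' ∧ c = s(y, y')}

/-- The gate map of the cherry reduction: `a, b ↦ v`, all else fixed. -/
def cherryMap (a b v : U) : U → U := fun p => if p = a ∨ p = b then v else p

/-- `L_U` for the cherry reduction at the proper cherry `a,b` with neighbour `v`. -/
def cherryLU (L : Set (Sym2 U)) (a b v : U) : Set (Sym2 U) :=
  {c | ∃ p q : U, s(p, q) ∈ L ∧ cherryMap a b v p ≠ cherryMap a b v q ∧
       c = s(cherryMap a b v p, cherryMap a b v q)}

/-- `X(a, L^{ab}) = {y : ay ∈ L − {ab}}`. -/
def sideSet (L : Set (Sym2 U)) (a b : U) : Set U :=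
  {y | s(a, y) ∈ L ∧ s(a, y) ≠ s(a, b)}

/-- `Σ_{c ∈ LU} ρ(c)·λ^{TU}_c = 0` as a linear form on `ℝ^{E_U}`. -/
def RhoAnnihilates (TU : SimpleGraph U) (LU : Set (Sym2 U)) (ρ : Sym2 U → ℝ) : Prop :=
  ∀ η : Sym2 U → ℝ, (∀ e, e ∉ TU.edgeSet → η e = 0) →
    ∑ᶠ c ∈ LU, ρ c * pdist TU η c = 0

/-- `D_ω(ab|cd)`. -/
def Dq (G : SimpleGraph U) (ω : Sym2 U → ℝ) (a b c d : U) : ℝ :=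
  max (tdist G ω a c + tdist G ω b d) (tdist G ω a d + tdist G ω b c)
    - tdist G ω a b - tdist G ω c d

/-- The star tree on `X` with central vertex `z`. -/
def starGraph (X : Set U) (z : U) : SimpleGraph U :=
  SimpleGraph.fromEdgeSet {c | ∃ x ∈ X, c = s(x, z)}

/-- `A ∨ B`: all cords with one end in `A` and the other in `B`. -/
def vee (A B : Set U) : Set (Sym2 U) := {c | ∃ a ∈ A, ∃ b ∈ B, c = s(a, b)}

/-- A `T`-shelling of `binom(X,2) − L` with cords `aᵢbᵢ` and pivots `pᵢ, qᵢ`. -/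
def IsShelling (X : Set U) (G : SimpleGraph U) (L : Set (Sym2 U)) (m : ℕ)
    (a b p q : Fin m → U) : Prop :=
  (∀ i, a i ∈ X ∧ b i ∈ X ∧ a i ≠ b i ∧ s(a i, b i) ∉ L) ∧
  Function.Injective (fun i => s(a i, b i)) ∧
  (∀ x y : U, x ∈ X → y ∈ X → x ≠ y → s(x, y) ∉ L → ∃ i, s(x, y) = s(a i, b i)) ∧
  ∀ i : Fin m,
    p i ∈ X ∧ q i ∈ X ∧ p i ≠ q i ∧
    p i ≠ a i ∧ p i ≠ b i ∧ q i ≠ a i ∧ q i ≠ b i ∧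
    DisplaysQ G (a i) (p i) (b i) (q i) ∧
    ∀ u w : U, u ∈ ({a i, b i, p i, q i} : Set U) → w ∈ ({a i, b i, p i, q i} : Set U) →
      u ≠ w → s(u, w) ≠ s(a i, b i) →
      (s(u, w) ∈ L ∨ ∃ j : Fin m, j < i ∧ s(u, w) = s(a j, b j))

/-- `L` is an `s`-lasso for `G`. -/
def SLasso (X : Set U) (G : SimpleGraph U) (L : Set (Sym2 U)) : Prop :=
  cup L = X ∧ ∃ (m : ℕ) (a b p q : Fin m → U), IsShelling X G L m a b p q

/-- `L'_{A,B}` of Corollary 3 (the cherry construction). -/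
def LAB (L' : Set (Sym2 U)) (X : Set U) (a b : U) (A B : Set U) : Set (Sym2 U) :=
  {c | c ∈ L' ∧ ∀ u ∈ c, u ∈ X ∧ u ≠ a ∧ u ≠ b} ∪
  {c | ∃ x ∈ A ∪ {b}, c = s(a, x)} ∪
  {c | ∃ x ∈ B, c = s(b, x)}

end Lasso

/-! A proper weighting `ω` that is a large constant on the edges stays proper under any small
perturbation `ω₀ ∈ ℝ^E`, and `(T, ω)`, `(T, ω + ω₀)` are `L`-isometric exactly when every
`λ^T_{xy}`, `xy ∈ L`, kills `ω₀`; so `L` is an edge-weight lasso iff these maps have no common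
non-zero kernel element. This kernel condition forces `⋃ L = X`: if a leaf `x` lies on no cord,
the indicator of its pendant edge is killed, since no path between two other leaves passes
through `x`. -/

namespace Lasso

variable {U : Type} {G : SimpleGraph U}

def HasTrivialPathKernel (G : SimpleGraph U) (L : Set (Sym2 U)) : Prop :=
  ∀ ω₀ : Sym2 U → ℝ, (∀ e, e ∉ G.edgeSet → ω₀ e = 0) →
    (∀ x y : U, s(x, y) ∈ L → tdist G ω₀ x y = 0) → ω₀ = 0

lemma edgeSet_finite_of_support_finite (h : G.support.Finite) : G.edgeSet.Finite :=
  ((h.prod h).image _).subset <| by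
    rw [← Set.sym2_eq_mk_image]; exact SimpleGraph.edgeSet_subset_sym2_iff.mpr subset_rfl

lemma IsXTree.edgeSet_finite {X : Set U} (hT : IsXTree X G) : G.edgeSet.Finite :=
  edgeSet_finite_of_support_finite hT.support_finite

lemma IsLeaf.mem_support {x : U} (hx : IsLeaf G x) : x ∈ G.support := by
  obtain ⟨v, hv⟩ := Set.ncard_eq_one.mp hx
  exact ⟨v, show v ∈ G.neighborSet x from hv ▸ Set.mem_singleton v⟩

lemma IsXTree.isLeaf {X : Set U} (hT : IsXTree X G) {x : U} (hx : x ∈ X) : IsLeaf G x := by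
  rwa [hT.leaves_eq] at hx

lemma tdist_add (hE : G.edgeSet.Finite) (ω η : Sym2 U → ℝ) (x y : U) :
    tdist G (ω + η) x y = tdist G ω x y + tdist G η x y :=
  finsum_mem_add_distrib <| hE.subset fun _ he => he.1

lemma tdist_sub (hE : G.edgeSet.Finite) (ω η : Sym2 U → ℝ) (x y : U) :
    tdist G (ω - η) x y = tdist G ω x y - tdist G η x y :=
  finsum_mem_sub_distrib _ _ <| hE.subset fun _ he => he.1

lemma notMem_pathEdges_of_isLeaf {x y z : U} (hx : IsLeaf G x) (hy : y ≠ x) (hz : z ≠ x)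
    (hyz : G.Reachable y z) (v : U) : s(x, v) ∉ pathEdges G y z := by
  obtain ⟨w⟩ := hyz
  obtain ⟨c, hc⟩ := Set.ncard_eq_one.mp hx
  have hxw : x ∉ w.bypass.support :=
    w.bypass_isPath.isTrail.not_mem_support_of_subsingleton_neighborSet hy.symm hz.symm
      (hc ▸ Set.subsingleton_singleton)
  exact fun he => hxw (w.bypass.fst_mem_support_of_mem_edges (he.2 _))

lemma isProperWeighting_indicator_add {C : ℝ} {ω₀ : Sym2 U → ℝ}
    (hω₀ : ∀ e, e ∉ G.edgeSet → ω₀ e = 0) (hC : ∀ e ∈ G.edgeSet, |ω₀ e| < C) :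
    IsProperWeighting G (G.edgeSet.indicator (fun _ => C) + ω₀) := by
  have hpos : ∀ e ∈ G.edgeSet, 0 < (G.edgeSet.indicator (fun _ => C) + ω₀) e := fun e he => by
    simp only [Pi.add_apply, Set.indicator_of_mem he]
    linarith [neg_abs_le (ω₀ e), hC e he]
  refine ⟨⟨fun e => ?_, fun e he => ?_⟩, fun e he _ => hpos e he⟩
  · by_cases he : e ∈ G.edgeSet
    · exact (hpos e he).le
    · simp [Set.indicator_of_notMem he, hω₀ e he]
  · simp [Set.indicator_of_notMem he, hω₀ e he]

lemma hasTrivialPathKernel_of_edgeWeightLasso (hE : G.edgeSet.Finite) {L : Set (Sym2 U)}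
    (h : EdgeWeightLasso G L) : HasTrivialPathKernel G L := by
  intro ω₀ hω₀ hker
  obtain ⟨M, hM⟩ := (hE.image fun e => |ω₀ e|).bddAbove
  have hC : ∀ e ∈ G.edgeSet, |ω₀ e| < M + 1 := fun e he =>
    (hM ⟨e, he, rfl⟩).trans_lt (lt_add_one M)
  set ω := G.edgeSet.indicator fun _ => M + 1
  have hω : IsProperWeighting G ω := by
    simpa using isProperWeighting_indicator_add (ω₀ := 0) (fun _ _ => rfl)
      fun e he => by simpa using (abs_nonneg (ω₀ e)).trans_lt (hC e he)
  have hiso : LIso L G ω G (ω + ω₀) := fun x y hxy => by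
    rw [tdist_add hE, hker x y hxy, add_zero]
  simpa using h ω (ω + ω₀) hω (isProperWeighting_indicator_add hω₀ hC) hiso

lemma edgeWeightLasso_of_hasTrivialPathKernel (hE : G.edgeSet.Finite) {L : Set (Sym2 U)}
    (h : HasTrivialPathKernel G L) : EdgeWeightLasso G L := by
  intro ω ω' hω hω' hiso
  have hzero : ω' - ω = 0 := h (ω' - ω)
    (fun e he => by simp [hω.zero_off e he, hω'.zero_off e he])
    (fun x y hxy => by rw [tdist_sub hE, hiso x y hxy, sub_self])
  exact (sub_eq_zero.mp hzero).symm

lemma cup_eq_of_hasTrivialPathKernel {X : Set U} (hT : IsXTree X G) {L : Set (Sym2 U)}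
    (hL : IsCordSet X L) (h : HasTrivialPathKernel G L) : cup L = X := by
  refine subset_antisymm (fun u ⟨c, hc, hu⟩ => (hL c hc).2 u hu) fun x hxX => ?_
  by_contra hx
  obtain ⟨v, hxv : G.Adj x v⟩ := (hT.isLeaf hxX).mem_support
  set ω₀ : Sym2 U → ℝ := fun e => if e = s(x, v) then 1 else 0
  have hker : ∀ y z : U, s(y, z) ∈ L → tdist G ω₀ y z = 0 := by
    intro y z hyz
    have hy : y ≠ x := fun hyx => hx ⟨_, hyz, hyx ▸ Sym2.mem_mk_left y z⟩
    have hz : z ≠ x := fun hzx => hx ⟨_, hyz, hzx ▸ Sym2.mem_mk_right y z⟩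
    have hyX := (hL _ hyz).2 y (Sym2.mem_mk_left y z)
    have hzX := (hL _ hyz).2 z (Sym2.mem_mk_right y z)
    have hreach := hT.connected y (hT.isLeaf hyX).mem_support z (hT.isLeaf hzX).mem_support
    refine finsum_mem_of_eqOn_zero fun e he => if_neg ?_
    rintro rfl
    exact notMem_pathEdges_of_isLeaf (hT.isLeaf hxX) hy hz hreach v he
  have hsupp : ∀ e, e ∉ G.edgeSet → ω₀ e = 0 := fun e he =>
    if_neg (by rintro rfl; exact he hxv)
  simpa [ω₀] using congrFun (h ω₀ hsupp hker) s(x, v)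

theorem edgeWeightLasso_iff_cup_and_no_kernel_general {U : Type}
    (X : Set U) (G : SimpleGraph U)
    (hT : IsXTree X G)
    (L : Set (Sym2 U)) (hL : IsCordSet X L) :
    EdgeWeightLasso G L ↔
      (cup L = X ∧
        ∀ ω₀ : Sym2 U → ℝ, (∀ e, e ∉ G.edgeSet → ω₀ e = 0) →
          (∀ x y : U, s(x, y) ∈ L → tdist G ω₀ x y = 0) → ω₀ = 0) := by
  refine ⟨fun h => ?_, fun h => edgeWeightLasso_of_hasTrivialPathKernel hT.edgeSet_finite h.2⟩
  have hker := hasTrivialPathKernel_of_edgeWeightLasso hT.edgeSet_finite h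
  exact ⟨cup_eq_of_hasTrivialPathKernel hT hL hker, hker⟩

/-- Theorem 1 (Dress–Huber–Steel): `L` is an edge-weight lasso for the
`X`-tree `T` iff `X = ⋃ L` and no non-zero `ω₀ ∈ ℝ^E` is annihilated by all
the linear maps `λ^T_{xy}` with `xy ∈ L`. -/
theorem edgeWeightLasso_iff_cup_and_no_kernel {U : Type}
    (X : Set U) (G : SimpleGraph U)
    (hXfin : X.Finite) (hX3 : 3 ≤ X.ncard) (hT : IsXTree X G)
    (L : Set (Sym2 U)) (hL : IsCordSet X L) :
    EdgeWeightLasso G L ↔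
      (cup L = X ∧
        ∀ ω₀ : Sym2 U → ℝ, (∀ e, e ∉ G.edgeSet → ω₀ e = 0) →
          (∀ x y : U, s(x, y) ∈ L → tdist G ω₀ x y = 0) → ω₀ = 0) :=
  edgeWeightLasso_iff_cup_and_no_kernel_general X G hT L hL

end Lasso
end
end

section
/- Let T* be the star tree on X, where |X| = n ≥ 4. If L ⊆ binom(X,2) is a topological lasso for T*, then L = binom(X,2); that is, no proper subset of binom(X,2) is a topological lasso for T*. -/
/- Common definitions for formalizing results of Dress, Huber & Steel,
   "Lassoing a phylogenetic tree I: Basic properties, shellings, and covers".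

   Trees are modelled as simple graphs on an ambient vertex type `U`;
   the vertex set of the tree is the support of the graph (every vertex of a
   tree with at least two vertices has degree >= 1). -/

noncomputable section
open scoped Classical

/- If a cord `xy` of `X` is missing from `L`, hang the cherry `x, y` from a new vertex `w`
joined to the centre `z`. Weighting every edge of the star by `2`, and the three edges of this
double star at `w` by `1` and all others by `2`, makes every cord except `xy` have length `4`
in both trees, so the two trees are `L`-isometric; yet no isomorphism fixing `X` exists, since
the centre of the star would have to be adjacent both to `x` (forcing `w`) and to the
remaining leaves (forcing `z`). -/

namespace Lasso

variable {U : Type} {G : SimpleGraph U}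

theorem isAcyclic_of_neighborSet_subsingleton (s : Finset U) (hs : s.card ≤ 2)
    (h : ∀ v ∉ s, (G.neighborSet v).Subsingleton) : G.IsAcyclic := by
  intro v c hc
  -- every vertex of a cycle has two neighbours on it, and a cycle has at least three vertices
  have hsupp : c.support.tail.toFinset ⊆ s := by
    intro u hu
    have hu : u ∈ c.support := List.mem_of_mem_tail (List.mem_toFinset.mp hu)
    by_contra hus
    have htwo := hc.ncard_neighborSet_toSubgraph_eq_two hu
    have hsub : (c.toSubgraph.neighborSet u).Subsingleton :=
      (h u hus).anti fun _ ht => c.toSubgraph.adj_sub ht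
    obtain ⟨x, y, hxy, hxy'⟩ := Set.ncard_eq_two.mp htwo
    exact hxy (hsub (by simp [hxy']) (by simp [hxy']))
  have hcard := Finset.card_le_card hsupp
  rw [List.toFinset_card_of_nodup hc.support_nodup, List.length_tail,
    SimpleGraph.Walk.length_support] at hcard
  have := hc.three_le_length
  omega

theorem pathEdges_eq_of_isAcyclic (hG : G.IsAcyclic) {a b : U} (p : G.Walk a b)
    (hp : p.IsPath) : pathEdges G a b = {e | e ∈ p.edges} := by
  ext e
  refine ⟨fun he => he.2 p, fun he => ⟨p.edges_subset_edgeSet he, fun q => ?_⟩⟩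
  have hpq : (⟨p, hp⟩ : G.Path a b) = q.toPath := (hG.subsingleton_path a b).elim _ _
  have hpq' : p = q.bypass := congrArg Subtype.val hpq
  exact q.edges_bypass_subset_edges (hpq' ▸ he)

theorem tdist_eq_sum_of_isAcyclic (hG : G.IsAcyclic) (ω : Sym2 U → ℝ) {a b : U}
    (p : G.Walk a b) (hp : p.IsPath) : tdist G ω a b = (p.edges.map ω).sum := by
  rw [tdist, pathEdges_eq_of_isAcyclic hG p hp, ← List.sum_toFinset _ hp.edges_nodup,
    ← finsum_mem_coe_finset]
  simp

theorem tdist_comm (ω : Sym2 U → ℝ) (a b : U) : tdist G ω a b = tdist G ω b a := by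
  have key : ∀ a b, pathEdges G a b ⊆ pathEdges G b a := fun a b e ⟨he, hall⟩ =>
    ⟨he, fun p => by simpa using hall p.reverse⟩
  rw [tdist, tdist, (key a b).antisymm (key b a)]

theorem isProperWeighting_indicator {f : Sym2 U → ℝ} (hf : ∀ e, 0 < f e) :
    IsProperWeighting G (G.edgeSet.indicator f) where
  nonneg e := Set.indicator_nonneg (fun e _ => (hf e).le) e
  zero_off _ he := Set.indicator_of_notMem he f
  interior_pos e he _ := by rw [Set.indicator_of_mem he]; exact hf e

section Star

variable {X : Set U} {z : U}

theorem starGraph_adj (hz : z ∉ X) {a b : U} :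
    (starGraph X z).Adj a b ↔ a ∈ X ∧ b = z ∨ a = z ∧ b ∈ X := by
  simp only [starGraph, SimpleGraph.fromEdgeSet_adj, Set.mem_ofPred_eq, Sym2.eq_iff]
  constructor
  · rintro ⟨⟨u, hu, ⟨rfl, rfl⟩ | ⟨rfl, rfl⟩⟩, -⟩
    exacts [Or.inl ⟨hu, rfl⟩, Or.inr ⟨rfl, hu⟩]
  · rintro (⟨ha, rfl⟩ | ⟨rfl, hb⟩)
    exacts [⟨⟨a, ha, Or.inl ⟨rfl, rfl⟩⟩, fun h => hz (h ▸ ha)⟩,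
      ⟨⟨b, hb, Or.inr ⟨rfl, rfl⟩⟩, fun h => hz (h ▸ hb)⟩]

theorem neighborSet_starGraph_of_mem (hz : z ∉ X) {a : U} (ha : a ∈ X) :
    (starGraph X z).neighborSet a = {z} := by
  ext b
  simp only [SimpleGraph.mem_neighborSet, starGraph_adj hz, Set.mem_singleton_iff]
  exact ⟨by rintro (⟨-, rfl⟩ | ⟨rfl, -⟩); exacts [rfl, (hz ha).elim], fun hb => Or.inl ⟨ha, hb⟩⟩

theorem neighborSet_starGraph_of_notMem (hz : z ∉ X) {a : U} (ha : a ∉ X) (haz : a ≠ z) :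
    (starGraph X z).neighborSet a = ∅ := by
  ext b
  simp only [SimpleGraph.mem_neighborSet, starGraph_adj hz]
  tauto

theorem isAcyclic_starGraph (hz : z ∉ X) : (starGraph X z).IsAcyclic := by
  refine isAcyclic_of_neighborSet_subsingleton {z} (by simp) fun v hv => ?_
  by_cases hvX : v ∈ X
  · rw [neighborSet_starGraph_of_mem hz hvX]; exact Set.subsingleton_singleton
  · rw [neighborSet_starGraph_of_notMem hz hvX (by simpa using hv)]; exact Set.subsingleton_empty

theorem tdist_starGraph (hz : z ∉ X) (ω : Sym2 U → ℝ) {a b : U} (ha : a ∈ X) (hb : b ∈ X)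
    (hab : a ≠ b) : tdist (starGraph X z) ω a b = ω s(a, z) + ω s(z, b) := by
  have haz : (starGraph X z).Adj a z := (starGraph_adj hz).2 (Or.inl ⟨ha, rfl⟩)
  have hzb : (starGraph X z).Adj z b := (starGraph_adj hz).2 (Or.inr ⟨rfl, hb⟩)
  rw [tdist_eq_sum_of_isAcyclic (isAcyclic_starGraph hz) ω (.cons haz (.cons hzb .nil))]
  · simp
  · simp [hab, haz.ne, hzb.ne]

end Star

def doubleStar (A B : Set U) (z w : U) : SimpleGraph U :=
  starGraph (insert w A) z ⊔ starGraph (insert z B) w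

section DoubleStar

variable {A B : Set U} {z w : U}

theorem doubleStar_comm : doubleStar A B z w = doubleStar B A w z := sup_comm _ _

theorem doubleStar_adj (hz : z ∉ A ∪ B) (hw : w ∉ A ∪ B) (hzw : z ≠ w) {a b : U} :
    (doubleStar A B z w).Adj a b ↔ a ∈ A ∧ b = z ∨ a = z ∧ b ∈ A ∨ a ∈ B ∧ b = w ∨
      a = w ∧ b ∈ B ∨ a = z ∧ b = w ∨ a = w ∧ b = z := by
  have hz' : z ∉ insert w A := by simp_all
  have hw' : w ∉ insert z B := by simp_all [Ne.symm hzw]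
  simp only [doubleStar, SimpleGraph.sup_adj, starGraph_adj hz', starGraph_adj hw',
    Set.mem_insert_iff]
  tauto

theorem neighborSet_doubleStar_of_mem_left (hAB : Disjoint A B) (hz : z ∉ A ∪ B)
    (hw : w ∉ A ∪ B) (hzw : z ≠ w) {a : U} (ha : a ∈ A) :
    (doubleStar A B z w).neighborSet a = {z} := by
  ext b
  simp only [SimpleGraph.mem_neighborSet, doubleStar_adj hz hw hzw, Set.mem_singleton_iff]
  have := hAB.notMem_of_mem_left ha
  grind

theorem neighborSet_doubleStar_of_mem_right (hAB : Disjoint A B) (hz : z ∉ A ∪ B)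
    (hw : w ∉ A ∪ B) (hzw : z ≠ w) {b : U} (hb : b ∈ B) :
    (doubleStar A B z w).neighborSet b = {w} := by
  rw [doubleStar_comm]
  exact neighborSet_doubleStar_of_mem_left hAB.symm (Set.union_comm A B ▸ hw)
    (Set.union_comm A B ▸ hz) hzw.symm hb

theorem neighborSet_doubleStar_left_center (hz : z ∉ A ∪ B) (hw : w ∉ A ∪ B) (hzw : z ≠ w) :
    (doubleStar A B z w).neighborSet z = insert w A := by
  ext b
  simp only [SimpleGraph.mem_neighborSet, doubleStar_adj hz hw hzw, Set.mem_insert_iff]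
  grind

theorem neighborSet_doubleStar_right_center (hz : z ∉ A ∪ B) (hw : w ∉ A ∪ B) (hzw : z ≠ w) :
    (doubleStar A B z w).neighborSet w = insert z B := by
  rw [doubleStar_comm]
  exact neighborSet_doubleStar_left_center (Set.union_comm A B ▸ hw)
    (Set.union_comm A B ▸ hz) hzw.symm

theorem neighborSet_doubleStar_of_notMem (hz : z ∉ A ∪ B) (hw : w ∉ A ∪ B) (hzw : z ≠ w)
    {v : U} (hv : v ∉ A ∪ B) (hvz : v ≠ z) (hvw : v ≠ w) :
    (doubleStar A B z w).neighborSet v = ∅ := by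
  ext b
  simp only [SimpleGraph.mem_neighborSet, doubleStar_adj hz hw hzw]
  grind

theorem deg_doubleStar (hA : A.Finite) (hB : B.Finite) (hAB : Disjoint A B)
    (hz : z ∉ A ∪ B) (hw : w ∉ A ∪ B) (hzw : z ≠ w) (v : U) :
    deg (doubleStar A B z w) v =
      if v ∈ A ∪ B then 1 else if v = z then A.ncard + 1 else if v = w then B.ncard + 1 else 0 := by
  unfold deg
  split_ifs with hv hvz hvw
  · rcases hv with hv | hv
    · rw [neighborSet_doubleStar_of_mem_left hAB hz hw hzw hv, Set.ncard_singleton]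
    · rw [neighborSet_doubleStar_of_mem_right hAB hz hw hzw hv, Set.ncard_singleton]
  · rw [hvz, neighborSet_doubleStar_left_center hz hw hzw,
      Set.ncard_insert_of_notMem (by simp_all) hA]
  · rw [hvw, neighborSet_doubleStar_right_center hz hw hzw,
      Set.ncard_insert_of_notMem (by simp_all) hB]
  · rw [neighborSet_doubleStar_of_notMem hz hw hzw hv hvz hvw, Set.ncard_empty]

theorem support_doubleStar (hA : A.Nonempty) (hB : B.Nonempty) (hz : z ∉ A ∪ B)
    (hw : w ∉ A ∪ B) (hzw : z ≠ w) :
    (doubleStar A B z w).support = insert z (insert w (A ∪ B)) := by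
  obtain ⟨a, ha⟩ := hA
  obtain ⟨b, hb⟩ := hB
  ext v
  simp only [SimpleGraph.mem_support, doubleStar_adj hz hw hzw, Set.mem_insert_iff,
    Set.mem_union]
  constructor
  · grind
  · rintro (rfl | rfl | hv | hv)
    exacts [⟨a, by simp [ha]⟩, ⟨b, by simp [hb]⟩, ⟨z, by simp [hv]⟩, ⟨w, by simp [hv]⟩]

theorem isAcyclic_doubleStar (hAB : Disjoint A B) (hz : z ∉ A ∪ B) (hw : w ∉ A ∪ B)
    (hzw : z ≠ w) : (doubleStar A B z w).IsAcyclic := by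
  refine isAcyclic_of_neighborSet_subsingleton {z, w} Finset.card_le_two fun v hv => ?_
  simp only [Finset.mem_insert, Finset.mem_singleton, not_or] at hv
  by_cases hvA : v ∈ A
  · rw [neighborSet_doubleStar_of_mem_left hAB hz hw hzw hvA]
    exact Set.subsingleton_singleton
  by_cases hvB : v ∈ B
  · rw [neighborSet_doubleStar_of_mem_right hAB hz hw hzw hvB]
    exact Set.subsingleton_singleton
  · rw [neighborSet_doubleStar_of_notMem hz hw hzw (by simp [hvA, hvB]) hv.1 hv.2]
    exact Set.subsingleton_empty

theorem isXTree_doubleStar (hA : A.Finite) (hB : B.Finite) (hA2 : 2 ≤ A.ncard)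
    (hB2 : 2 ≤ B.ncard) (hAB : Disjoint A B) (hz : z ∉ A ∪ B) (hw : w ∉ A ∪ B)
    (hzw : z ≠ w) : IsXTree (A ∪ B) (doubleStar A B z w) := by
  have hsupp := support_doubleStar (Set.nonempty_of_ncard_ne_zero (by omega))
    (Set.nonempty_of_ncard_ne_zero (by omega)) hz hw hzw
  have hdeg := deg_doubleStar hA hB hAB hz hw hzw
  have hadj := @doubleStar_adj _ _ _ _ _ hz hw hzw
  refine ⟨?_, ⟨z, by simp [hsupp]⟩, ?_, isAcyclic_doubleStar hAB hz hw hzw, ?_, ?_⟩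
  · rw [hsupp]
    exact ((hA.union hB).insert w).insert z
  · have hwz : (doubleStar A B z w).Adj w z := hadj.2 (by simp)
    have hreach : ∀ v ∈ (doubleStar A B z w).support, (doubleStar A B z w).Reachable v z := by
      intro v hv
      rw [hsupp] at hv
      rcases hv with rfl | rfl | hv | hv
      · rfl
      · exact hwz.reachable
      · exact (hadj.2 (by simp [hv])).reachable
      · exact (hadj.2 (by simp [hv])).reachable.trans hwz.reachable
    exact fun a ha b hb => (hreach a ha).trans (hreach b hb).symm
  · intro v
    rw [hdeg]
    split_ifs <;> omega
  · ext v
    simp only [Set.mem_ofPred_eq, IsLeaf, hdeg]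
    split_ifs with hv <;> simp only [hv, false_iff] <;> omega

theorem tdist_doubleStar_left_left (hAB : Disjoint A B) (hz : z ∉ A ∪ B) (hw : w ∉ A ∪ B)
    (hzw : z ≠ w) (ω : Sym2 U → ℝ) {a a' : U} (ha : a ∈ A) (ha' : a' ∈ A) (haa' : a ≠ a') :
    tdist (doubleStar A B z w) ω a a' = ω s(a, z) + ω s(z, a') := by
  have hadj := @doubleStar_adj _ _ _ _ _ hz hw hzw
  have haz : (doubleStar A B z w).Adj a z := hadj.2 (by simp [ha])
  have hza' : (doubleStar A B z w).Adj z a' := hadj.2 (by simp [ha'])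
  rw [tdist_eq_sum_of_isAcyclic (isAcyclic_doubleStar hAB hz hw hzw) ω
    (.cons haz (.cons hza' .nil))]
  · simp
  · simp [haa', haz.ne, hza'.ne]

theorem tdist_doubleStar_left_right (hAB : Disjoint A B) (hz : z ∉ A ∪ B)
    (hw : w ∉ A ∪ B) (hzw : z ≠ w) (ω : Sym2 U → ℝ) {a b : U} (ha : a ∈ A) (hb : b ∈ B) :
    tdist (doubleStar A B z w) ω a b = ω s(a, z) + ω s(z, w) + ω s(w, b) := by
  have hadj := @doubleStar_adj _ _ _ _ _ hz hw hzw
  have haz : (doubleStar A B z w).Adj a z := hadj.2 (by simp [ha])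
  have hzw' : (doubleStar A B z w).Adj z w := hadj.2 (by simp)
  have hwb : (doubleStar A B z w).Adj w b := hadj.2 (by simp [hb])
  rw [tdist_eq_sum_of_isAcyclic (isAcyclic_doubleStar hAB hz hw hzw) ω
    (.cons haz (.cons hzw' (.cons hwb .nil)))]
  · simp [add_assoc]
  · simp [haz.ne, hzw'.ne, hwb.ne, hAB.ne_of_mem ha hb, (ne_of_mem_of_not_mem (Or.inr hb) hz).symm,
      ne_of_mem_of_not_mem (Or.inl ha) hw]

theorem not_fixingIso_starGraph_doubleStar (hAB : Disjoint A B) (hz : z ∉ A ∪ B)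
    (hw : w ∉ A ∪ B) (hzw : z ≠ w) {a b : U} (ha : a ∈ A) (hb : b ∈ B) :
    ¬ FixingIso (A ∪ B) (starGraph (A ∪ B) z) (doubleStar A B z w) := by
  rintro ⟨φ, hφ⟩
  have hnbr : ∀ v ∈ A ∪ B, φ z ∈ (doubleStar A B z w).neighborSet v := fun v hv =>
    hφ v hv ▸ φ.map_adj_iff.2 ((starGraph_adj hz).2 (Or.inl ⟨hv, rfl⟩))
  have hza := hnbr a (Or.inl ha)
  have hzb := hnbr b (Or.inr hb)
  rw [neighborSet_doubleStar_of_mem_left hAB hz hw hzw ha] at hza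
  rw [neighborSet_doubleStar_of_mem_right hAB hz hw hzw hb] at hzb
  exact hzw (hza.symm.trans hzb)

theorem tdist_doubleStar_indicator_eq_four (hAB : Disjoint A B) (hz : z ∉ A ∪ B) (hw : w ∉ A ∪ B)
    (hzw : z ≠ w) {a b : U} (ha : a ∈ A) (hb : b ∈ A ∪ B) (hab : a ≠ b) :
    tdist (doubleStar A B z w)
      ((doubleStar A B z w).edgeSet.indicator fun e => if w ∈ e then 1 else 2) a b = 4 := by
  have hadj := @doubleStar_adj _ _ _ _ _ hz hw hzw
  have hweight : ∀ {u v}, (doubleStar A B z w).Adj u v →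
      (doubleStar A B z w).edgeSet.indicator (fun e => if w ∈ e then (1 : ℝ) else 2) s(u, v) =
        if w = u ∨ w = v then 1 else 2 := fun huv => by
    simp only [Set.indicator_of_mem ((SimpleGraph.mem_edgeSet _).2 huv), Sym2.mem_iff]
  have hwv : ∀ v ∈ A ∪ B, w ≠ v := fun v hv => (ne_of_mem_of_not_mem hv hw).symm
  rcases hb with hb | hb
  · rw [tdist_doubleStar_left_left hAB hz hw hzw _ ha hb hab,
      hweight (hadj.2 (by simp [ha])), hweight (hadj.2 (by simp [hb]))]
    norm_num [hzw.symm, hwv a (Or.inl ha), hwv b (Or.inl hb)]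
  · rw [tdist_doubleStar_left_right hAB hz hw hzw _ ha hb, hweight (hadj.2 (by simp [ha])),
      hweight (hadj.2 (by simp)), hweight (hadj.2 (by simp [hb]))]
    norm_num [hzw.symm, hwv a (Or.inl ha)]

end DoubleStar

theorem not_topologicalLasso_starGraph [Infinite U] {X A B : Set U} {z : U} (hA : A.Finite)
    (hB : B.Finite) (hA2 : 2 ≤ A.ncard) (hB2 : 2 ≤ B.ncard) (hAB : Disjoint A B)
    (hX : A ∪ B = X) (hz : z ∉ X) {L : Set (Sym2 U)} (hL : IsCordSet X L)
    (hLB : ∀ b ∈ B, ∀ b' ∈ B, s(b, b') ∉ L) : ¬ TopologicalLasso X (starGraph X z) L := by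
  subst hX
  intro h
  obtain ⟨w, hw⟩ := ((hA.union hB).insert z).infinite_compl.nonempty
  simp only [Set.mem_compl_iff, Set.mem_insert_iff, not_or] at hw
  obtain ⟨hwz, hw⟩ := hw
  have hzw : z ≠ w := Ne.symm hwz
  obtain ⟨a₀, ha₀⟩ := Set.nonempty_of_ncard_ne_zero (s := A) (by omega)
  obtain ⟨b₀, hb₀⟩ := Set.nonempty_of_ncard_ne_zero (s := B) (by omega)
  refine not_fixingIso_starGraph_doubleStar hAB hz hw hzw ha₀ hb₀
    (h _ (isXTree_doubleStar hA hB hA2 hB2 hAB hz hw hzw)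
      ((starGraph (A ∪ B) z).edgeSet.indicator fun _ => 2)
      ((doubleStar A B z w).edgeSet.indicator fun e => if w ∈ e then 1 else 2)
      (isProperWeighting_indicator fun _ => two_pos)
      (isProperWeighting_indicator fun _ => by split_ifs <;> norm_num) ?_)
  intro a b hab
  obtain ⟨hne, hmem⟩ := hL _ hab
  have ha : a ∈ A ∪ B := hmem a (Sym2.mem_mk_left a b)
  have hb : b ∈ A ∪ B := hmem b (Sym2.mem_mk_right a b)
  have hab' : a ≠ b := fun h => hne (Sym2.mk_isDiag_iff.2 h)
  have hstar : ∀ {u v}, (starGraph (A ∪ B) z).Adj u v →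
      (starGraph (A ∪ B) z).edgeSet.indicator (fun _ => (2 : ℝ)) s(u, v) = 2 := fun huv =>
    Set.indicator_of_mem ((SimpleGraph.mem_edgeSet _).2 huv) _
  rw [tdist_starGraph hz _ ha hb hab', hstar ((starGraph_adj hz).2 (Or.inl ⟨ha, rfl⟩)),
    hstar ((starGraph_adj hz).2 (Or.inr ⟨rfl, hb⟩))]
  rcases ha with ha | ha
  · rw [tdist_doubleStar_indicator_eq_four hAB hz hw hzw ha hb hab']
    norm_num
  rcases hb with hb | hb
  · rw [tdist_comm, tdist_doubleStar_indicator_eq_four hAB hz hw hzw hb (Or.inr ha) hab'.symm]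
    norm_num
  · exact absurd hab (hLB a ha b hb)

/-- For the star tree `T*` on `X` with `|X| = n ≥ 4`: the only topological
lasso for `T*` is `binom(X,2)` itself. -/
theorem star_topologicalLasso_eq_all_cords {U : Type} [Infinite U]
    (X : Set U) (z : U) (hz : z ∉ X)
    (hXfin : X.Finite) (hX4 : 4 ≤ X.ncard)
    (L : Set (Sym2 U)) (hL : IsCordSet X L)
    (h : TopologicalLasso X (starGraph X z) L) :
    L = {c : Sym2 U | ¬ c.IsDiag ∧ ∀ u ∈ c, u ∈ X} := by
  refine Set.Subset.antisymm (fun c hc => hL c hc) fun c => ?_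
  induction c using Sym2.ind with | _ x y => ?_
  rintro ⟨hxy, hmem⟩
  by_contra hxyL
  have hsub : {x, y} ⊆ X := Set.insert_subset (hmem x (Sym2.mem_mk_left x y))
    (Set.singleton_subset_iff.2 (hmem y (Sym2.mem_mk_right x y)))
  have hne : x ≠ y := fun h => hxy (Sym2.mk_isDiag_iff.2 h)
  refine not_topologicalLasso_starGraph hXfin.sdiff (Set.toFinite {x, y}) ?_
    (Set.ncard_pair hne).ge Set.disjoint_sdiff_left (Set.sdiff_union_of_subset hsub) hz hL ?_ h
  · rw [Set.ncard_sdiff hsub, Set.ncard_pair hne]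
    omega
  · have hdiag : ∀ u, s(u, u) ∉ L := fun u hu => (hL _ hu).1 (Sym2.mk_isDiag_iff.2 rfl)
    rintro b (rfl | rfl) b' (rfl | rfl)
    exacts [hdiag _, hxyL, by rwa [Sym2.eq_swap], hdiag _]

end Lasso
end
end
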